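/- For the weight w(x,t) = (1-x^2)^α e^{-t x^2} on [-1,1], β_1(t) = Φ(3/2, 5/2 + α; -t) / ((3 + 2α) Φ(1/2, 3/2 + α; -t)), where Φ is Kummer's confluent hypergeometric function. -/

import Mathlib

/-!
Pairing the recurrence `x P₁ = P₂ + β₁ P₀` with `P₀ = 1` and using that the odd moment of the even
weight vanishes gives `β₁ μ₀ = μ₂`. Expanding `e^{-t x²}` in its power series,
`μ_{2m} = ∑ₖ (-t)ᵏ / k! · I_{m+k}` with `I_n = ∫ x^{2n} (1 - x²)^α`, and integration by parts gives
`(n + 3/2 + α) I_{n+1} = (n + 1/2) I_n`; hence `μ_{2m} = I_m Φ(m + 1/2, m + 3/2 + α; -t)`, and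
`I₁ = I₀ / (3 + 2α)` yields the formula.
-/

open MeasureTheory Polynomial

noncomputable def kummerPhi (a b z : ℝ) : ℝ :=
  ∑' k : ℕ, ((∏ i ∈ Finset.range k, (a + i)) / (∏ i ∈ Finset.range k, (b + i))) * z ^ k / (Nat.factorial k)

open Set intervalIntegral

theorem intervalIntegrable_one_sub_sq_rpow_zero_one {α : ℝ} (hα : -1 < α) :
    IntervalIntegrable (fun x : ℝ => (1 - x ^ 2) ^ α) volume 0 1 := by
  have hsing : IntervalIntegrable (fun x : ℝ => (1 - x) ^ α) volume 0 1 := by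
    simpa using (intervalIntegrable_rpow' (a := 1) (b := 0) hα).comp_sub_left 1
  have hreg : ContinuousOn (fun x : ℝ => (1 + x) ^ α) (uIcc 0 1) := fun x hx => by
    rw [uIcc_of_le zero_le_one] at hx
    exact (continuousAt_const.add continuousAt_id).rpow_const
      (Or.inl (by linarith [hx.1] : (0:ℝ) < 1 + x).ne') |>.continuousWithinAt
  refine (hsing.mul_continuousOn hreg).congr fun x hx => ?_
  rw [uIoc_of_le zero_le_one] at hx
  rw [← Real.mul_rpow (by linarith [hx.2]) (by linarith [hx.1])]
  ring_nf

theorem intervalIntegrable_one_sub_sq_rpow {α : ℝ} (hα : -1 < α) :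
    IntervalIntegrable (fun x : ℝ => (1 - x ^ 2) ^ α) volume (-1) 1 := by
  have h := intervalIntegrable_one_sub_sq_rpow_zero_one hα
  refine IntervalIntegrable.trans (b := 0) ?_ h
  simpa using ((IntervalIntegrable.iff_comp_neg (by simp)).mp h).symm

theorem integral_eq_zero_of_odd {f : ℝ → ℝ} (hf : ∀ x, f (-x) = -f x) (a : ℝ) :
    ∫ x in -a..a, f x = 0 := by
  have h := integral_comp_neg (a := -a) (b := a) f
  simp only [hf, intervalIntegral.integral_neg, neg_neg] at h
  linarith

theorem hasSum_integral_exp_mul {a b c M : ℝ} {φ g : ℝ → ℝ} (hg : IntervalIntegrable g volume a b)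
    (hφ : ContinuousOn φ (uIcc a b)) (hφM : ∀ x ∈ uIcc a b, |φ x| ≤ M) :
    HasSum (fun k : ℕ => c ^ k / k.factorial * ∫ x in a..b, φ x ^ k * g x)
      (∫ x in a..b, Real.exp (c * φ x) * g x) := by
  have hexp : ∀ y : ℝ, HasSum (fun k : ℕ => y ^ k / k.factorial) (Real.exp y) := fun y => by
    rw [Real.exp_eq_exp_ℝ]; exact NormedSpace.expSeries_div_hasSum_exp y
  have hterm : ∀ k : ℕ, IntervalIntegrable (fun x => φ x ^ k * g x) volume a b := fun k =>
    hg.continuousOn_mul (hφ.pow k)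
  simp_rw [← intervalIntegral.integral_const_mul]
  refine intervalIntegral.hasSum_integral_of_dominated_convergence
    (fun k x => (|c| * M) ^ k / k.factorial * |g x|)
    (fun k => ((hterm k).const_mul _).def'.aestronglyMeasurable) (fun k => ?_)
    (Filter.Eventually.of_forall fun x _ => (hexp _).summable.mul_right _) ?_
    (Filter.Eventually.of_forall fun x _ => ?_)
  · refine Filter.Eventually.of_forall fun x hx => ?_
    rw [norm_mul, norm_mul, Real.norm_eq_abs, Real.norm_eq_abs, Real.norm_eq_abs, abs_div,
      abs_pow, Nat.abs_cast, abs_pow, mul_pow, mul_div_right_comm, mul_assoc]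
    gcongr
    exact hφM x (uIoc_subset_uIcc hx)
  · simp_rw [tsum_mul_right, (hexp _).tsum_eq]
    exact hg.abs.const_mul _
  · simpa [mul_pow, mul_div_right_comm, mul_assoc] using (hexp (c * φ x)).mul_right (g x)

theorem mul_integral_eq_integral_sq_mul_of_recurrence {a β : ℝ} {w : ℝ → ℝ}
    (heven : ∀ x, w (-x) = w x) (hw : IntervalIntegrable w volume (-a) a) {p₁ p₂ : ℝ[X]}
    (hp₁ : p₁.Monic) (hp₁deg : p₁.natDegree = 1)
    (horth : ∫ x in -a..a, p₂.eval x * w x = 0) (hrec : ∀ x, x * p₁.eval x = p₂.eval x + β) :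
    β * ∫ x in -a..a, w x = ∫ x in -a..a, x ^ 2 * w x := by
  have hp₂ : ∀ x, p₂.eval x * w x = x ^ 2 * w x + p₁.coeff 0 * (x * w x) - β * w x := fun x => by
    have h := hrec x
    rw [hp₁.eq_X_add_C hp₁deg, eval_add, eval_X, eval_C] at h
    linear_combination -w x * h
  have hodd : ∫ x in -a..a, x * w x = 0 := integral_eq_zero_of_odd (fun x => by rw [heven]; ring) a
  have h₁ : IntervalIntegrable (fun x => x * w x) volume (-a) a :=
    hw.continuousOn_mul continuousOn_id
  have h₂ : IntervalIntegrable (fun x => x ^ 2 * w x) volume (-a) a :=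
    hw.continuousOn_mul (continuousOn_pow 2)
  rw [integral_congr fun x _ => hp₂ x, integral_sub (h₂.add (h₁.const_mul _)) (hw.const_mul _),
    integral_add h₂ (h₁.const_mul _), intervalIntegral.integral_const_mul,
    intervalIntegral.integral_const_mul, hodd] at horth
  linarith

theorem intervalIntegrable_pow_mul_one_sub_sq_rpow {α : ℝ} (hα : -1 < α) (n : ℕ) :
    IntervalIntegrable (fun x : ℝ => x ^ n * (1 - x ^ 2) ^ α) volume (-1) 1 :=
  (intervalIntegrable_one_sub_sq_rpow hα).continuousOn_mul (continuous_pow n).continuousOn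

noncomputable def evenMoment (α : ℝ) (n : ℕ) : ℝ :=
  ∫ x in (-1:ℝ)..1, x ^ (2 * n) * (1 - x ^ 2) ^ α

section evenMoment

variable {α : ℝ}

/-- Integration by parts against `d/dx (x ^ (2n+1) (1 - x²) ^ (α+1))`, which vanishes at `±1`. -/
theorem evenMoment_succ (hα : -1 < α) (n : ℕ) :
    (n + 3/2 + α) * evenMoment α (n + 1) = (n + 1/2) * evenMoment α n := by
  set F : ℝ → ℝ := fun x => x ^ (2 * n + 1) * (1 - x ^ 2) ^ (α + 1)
  have hα1 : 0 < α + 1 := by linarith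
  have hF : Continuous F := (continuous_pow _).mul
    ((continuous_const.sub (continuous_pow 2)).rpow_const fun _ => Or.inr hα1.le)
  have hderiv : ∀ x ∈ Ioo (-1:ℝ) 1, HasDerivAt F ((2 * n + 1) * (x ^ (2 * n) * (1 - x ^ 2) ^ α)
      - (2 * n + 2 * α + 3) * (x ^ (2 * (n + 1)) * (1 - x ^ 2) ^ α)) x := by
    intro x hx
    have hsq : 0 < 1 - x ^ 2 := by nlinarith [hx.1, hx.2]
    have h := (hasDerivAt_pow (2 * n + 1) x).mul
      (((hasDerivAt_pow 2 x).const_sub 1).rpow_const (p := α + 1) (Or.inl hsq.ne'))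
    refine h.congr_deriv ?_
    rw [Real.rpow_add_one hsq.ne', add_sub_cancel_right, Nat.add_sub_cancel]
    push_cast
    ring
  have hFTC := integral_eq_sub_of_hasDerivAt_of_le (by norm_num) hF.continuousOn hderiv
    (((intervalIntegrable_pow_mul_one_sub_sq_rpow hα _).const_mul _).sub
      ((intervalIntegrable_pow_mul_one_sub_sq_rpow hα _).const_mul _))
  rw [integral_sub ((intervalIntegrable_pow_mul_one_sub_sq_rpow hα _).const_mul _)
      ((intervalIntegrable_pow_mul_one_sub_sq_rpow hα _).const_mul _),
    intervalIntegral.integral_const_mul, intervalIntegral.integral_const_mul] at hFTC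
  simp only [F, one_pow, neg_one_sq, sub_self, Real.zero_rpow hα1.ne', mul_zero] at hFTC
  unfold evenMoment
  linarith

theorem evenMoment_add (hα : -1 < α) (m k : ℕ) :
    evenMoment α (m + k) = evenMoment α m * (∏ i ∈ Finset.range k, ((m : ℝ) + 1/2 + i))
      / ∏ i ∈ Finset.range k, ((m : ℝ) + 3/2 + α + i) := by
  induction k with
  | zero => simp
  | succ k ih =>
    have hpos : ∀ j : ℕ, 0 < (m : ℝ) + 3/2 + α + j := fun j => by
      linarith [(m.cast_nonneg : (0 : ℝ) ≤ m), (j.cast_nonneg : (0 : ℝ) ≤ j)]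
    have hstep := evenMoment_succ hα (m + k)
    rw [← add_assoc, Finset.prod_range_succ, Finset.prod_range_succ,
      eq_div_iff (mul_pos (Finset.prod_pos fun j _ => hpos j) (hpos k)).ne']
    rw [eq_div_iff (Finset.prod_pos fun j _ => hpos j).ne'] at ih
    push_cast at hstep
    linear_combination (∏ i ∈ Finset.range k, ((m : ℝ) + 3/2 + α + i)) * hstep
      + ((m : ℝ) + 1/2 + k) * ih

theorem integral_pow_mul_weight (hα : -1 < α) (t : ℝ) (m : ℕ) :
    ∫ x in (-1:ℝ)..1, x ^ (2 * m) * ((1 - x ^ 2) ^ α * Real.exp (-t * x ^ 2))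
      = evenMoment α m * kummerPhi (m + 1/2) (m + 3/2 + α) (-t) := by
  have h := hasSum_integral_exp_mul (c := -t) (M := 1) (φ := fun x => x ^ 2)
    (intervalIntegrable_pow_mul_one_sub_sq_rpow hα (2 * m)) (continuous_pow 2).continuousOn
    fun x hx => by
      rw [uIcc_of_le (by norm_num)] at hx
      rw [abs_of_nonneg (sq_nonneg x)]
      nlinarith [hx.1, hx.2]
  rw [kummerPhi, ← tsum_mul_left]
  calc _ = ∫ x in (-1:ℝ)..1, Real.exp (-t * x ^ 2) * (x ^ (2 * m) * (1 - x ^ 2) ^ α) :=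
        integral_congr fun x _ => by ring
    _ = ∑' k : ℕ, (-t) ^ k / k.factorial * evenMoment α (m + k) := by
        rw [← h.tsum_eq]
        exact tsum_congr fun k => congrArg _ (integral_congr fun x _ => by ring)
    _ = _ := tsum_congr fun k => by
        rw [evenMoment_add hα]
        ring

end evenMoment

theorem beta_one_formula_general (α t : ℝ) (hα : α > -1)
    (w : ℝ → ℝ) (hw : ∀ x, w x = (1 - x ^ 2) ^ α * Real.exp (-t * x ^ 2))
    (P : ℕ → Polynomial ℝ)
    (hmonic : ∀ n, (P n).Monic)
    (hdeg : ∀ n, (P n).natDegree = n)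
    (horth : ∀ m n, m ≠ n → (∫ x in (-1:ℝ)..1, (P m).eval x * (P n).eval x * w x) = 0)
    (β : ℕ → ℝ)
    (hrec : ∀ n, 1 ≤ n → ∀ x : ℝ, x * (P n).eval x = (P (n+1)).eval x + β n * (P (n-1)).eval x)
    :
    β 1 = kummerPhi (3/2) (5/2 + α) (-t) / ((3 + 2 * α) * kummerPhi (1/2) (3/2 + α) (-t)) := by
  obtain rfl : w = _ := funext hw
  have hP₀ : P 0 = 1 := eq_one_of_monic_natDegree_zero (hmonic 0) (hdeg 0)
  have hwint :
      IntervalIntegrable (fun x => (1 - x ^ 2) ^ α * Real.exp (-t * x ^ 2)) volume (-1) 1 :=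
    (intervalIntegrable_one_sub_sq_rpow hα).mul_continuousOn (by fun_prop)
  have hμ₀pos : 0 < ∫ x in (-1:ℝ)..1, (1 - x ^ 2) ^ α * Real.exp (-t * x ^ 2) :=
    intervalIntegral_pos_of_pos_on hwint (fun x hx => by
      have : 0 < 1 - x ^ 2 := by nlinarith [hx.1, hx.2]
      positivity) (by norm_num)
  have hμ₀ : ∫ x in (-1:ℝ)..1, (1 - x ^ 2) ^ α * Real.exp (-t * x ^ 2)
      = evenMoment α 0 * kummerPhi (1/2) (3/2 + α) (-t) := by
    simpa using integral_pow_mul_weight hα t 0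
  have hμ₂ : ∫ x in (-1:ℝ)..1, x ^ 2 * ((1 - x ^ 2) ^ α * Real.exp (-t * x ^ 2))
      = evenMoment α 1 * kummerPhi (3/2) (5/2 + α) (-t) := by
    convert integral_pow_mul_weight hα t 1 using 3 <;> norm_num
  have hI₁ := evenMoment_succ hα 0
  have hβμ := mul_integral_eq_integral_sq_mul_of_recurrence (a := 1) (β := β 1)
    (fun x => by ring_nf) hwint (hmonic 1) (hdeg 1) (by simpa [hP₀] using horth 2 0 (by norm_num))
    (fun x => by simpa [hP₀] using hrec 1 le_rfl x)
  rw [hμ₀, hμ₂] at hβμ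
  rw [hμ₀] at hμ₀pos
  rw [eq_div_iff (mul_ne_zero (by linarith) (right_ne_zero_of_mul hμ₀pos.ne'))]
  refine mul_left_cancel₀ (left_ne_zero_of_mul hμ₀pos.ne') ?_
  linear_combination (3 + 2 * α) * hβμ + 2 * kummerPhi (3/2) (5/2 + α) (-t) * hI₁

theorem beta_one_formula (α t : ℝ) (hα : α > -1)
    (w : ℝ → ℝ) (hw : ∀ x, w x = (1 - x ^ 2) ^ α * Real.exp (-t * x ^ 2))
    (P : ℕ → Polynomial ℝ)
    (hmonic : ∀ n, (P n).Monic)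
    (hdeg : ∀ n, (P n).natDegree = n)
    (horth : ∀ m n, m ≠ n → (∫ x in (-1:ℝ)..1, (P m).eval x * (P n).eval x * w x) = 0)
    (h : ℕ → ℝ)
    (hh : ∀ n, h n = ∫ x in (-1:ℝ)..1, ((P n).eval x) ^ 2 * w x)
    (hpos : ∀ n, 0 < h n)
    (β : ℕ → ℝ) (hβ0 : β 0 = 0)
    (hrec : ∀ n, 1 ≤ n → ∀ x : ℝ, x * (P n).eval x = (P (n+1)).eval x + β n * (P (n-1)).eval x)
    :
    β 1 = kummerPhi (3/2) (5/2 + α) (-t) / ((3 + 2 * α) * kummerPhi (1/2) (3/2 + α) (-t)) :=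
  beta_one_formula_general α t hα w hw P hmonic hdeg horth β hrec
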